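/- arXiv:2406.03974 — 9 statements merged into one kernel-verified Lean document; each statement's English description precedes it below -/
import Mathlib

section
/- Let Π₁ and Π₂ be additively written abelian groups, and let c : Π₁ × Π₁ × Π₁ → Π₂ be a function that (i) satisfies the trivial-action 3-cocycle identity c(g₂,g₃,g₄) − c(g₁+g₂,g₃,g₄) + c(g₁,g₂+g₃,g₄) − c(g₁,g₂,g₃+g₄) + c(g₁,g₂,g₃) = 0 for all g₁,g₂,g₃,g₄ ∈ Π₁, and (ii) is additive in its first argument, i.e. c(g+g',h,k) = c(g,h,k) + c(g',h,k) for all g,g',h,k. For each pair (g₂,g₃) let Z(g₂,g₃) ∈ Hom(Π₁,Π₂) be the additive homomorphism g₁ ↦ c(g₁,g₂,g₃). Then Z satisfies the trivial-action 2-cocycle identity Z(h,k) − Z(g+h,k) + Z(g,h+k) − Z(g,h) = 0 in Hom(Π₁,Π₂) for all g,h,k ∈ Π₁. -/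
/-- If `c` is a trivial-action 3-cocycle on `Pi1` with values in `Pi2`
that is additive in its first argument, then the associated
`Hom(Pi1,Pi2)`-valued function `Z (g₂,g₃) = (g₁ ↦ c g₁ g₂ g₃)` is a
trivial-action 2-cocycle. -/
theorem stmt0 {Pi1 Pi2 : Type*} [AddCommGroup Pi1] [AddCommGroup Pi2]
    (c : Pi1 → Pi1 → Pi1 → Pi2)
    (hcoc : ∀ g₁ g₂ g₃ g₄ : Pi1,
      c g₂ g₃ g₄ - c (g₁ + g₂) g₃ g₄ + c g₁ (g₂ + g₃) g₄
        - c g₁ g₂ (g₃ + g₄) + c g₁ g₂ g₃ = 0)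
    (hadd : ∀ g g' h k : Pi1, c (g + g') h k = c g h k + c g' h k)
    (Z : Pi1 → Pi1 → (Pi1 →+ Pi2))
    (hZ : ∀ g₂ g₃ g₁ : Pi1, Z g₂ g₃ g₁ = c g₁ g₂ g₃) :
    ∀ g h k : Pi1, Z h k - Z (g + h) k + Z g (h + k) - Z g h = 0 := by
  intro g h k
  ext x
  simp only [AddMonoidHom.sub_apply, AddMonoidHom.add_apply, AddMonoidHom.zero_apply, hZ]
  have h1 := hcoc x g h k
  have h2 := hadd x g h k
  rw [h2] at h1
  linear_combination (norm := abel) -h1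
end

section
/- Let Π₁, Π₂ be additively written abelian groups, set A = Hom(Π₁,Π₂) (additive homomorphisms under pointwise addition), and let Z : Π₁ × Π₁ → A be a normalized trivial-action 2-cocycle, i.e. Z(h,k) − Z(g+h,k) + Z(g,h+k) − Z(g,h) = 0 and Z(g,0) = Z(0,g) = 0 for all g,h,k ∈ Π₁. Define G = A × Π₁ with multiplication (γ,g)·(γ',g') = (γ + γ' + Z(g,g'), g+g'), define H = Π₂ × A with componentwise addition, define ∂ : H → G by ∂(b,γ) = (γ,0), and define an action of G on H by (γ,g) ▷ (b,γ') = (b + γ'(g), γ'). Then: (a) G is a group with identity (0,0) and inverse (γ,g)⁻¹ = (−γ − Z(g,−g), −g); (b) ∂ is a group homomorphism whose image {(γ,0) : γ ∈ A} is central in G; (c) ▷ is an action of G on H by group automorphisms; (d) ∂(x ▷ h) = x·∂(h)·x⁻¹ for all x ∈ G, h ∈ H, and ∂(h) ▷ h' = h' for all h,h' ∈ H, so (G,H,∂,▷) is a crossed module; (e) for the section s(g) = (0,g) ∈ G and the lift F(g,h) = (0, Z(g,h)) ∈ H, one has (s(g) ▷ F(h,k)) + F(g,h+k) − F(g,h)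 − F(g+h,k) = (Z(h,k)(g), 0) in H for all g,h,k ∈ Π₁. -/
/-- The general strictification construction.  Given a normalized
trivial-action 2-cocycle `Z : Pi1 × Pi1 → A` with `A = Hom(Pi1, Pi2)`, the data
`G = A × Pi1` (twisted product), `H = Pi2 × A` (componentwise sum),
`∂(b,γ) = (γ,0)` and `(γ,g) ▷ (b,γ') = (b + γ'(g), γ')` forms a crossed module,
and the lift `F(g,h) = (0, Z(g,h))` of the section `s(g) = (0,g)` computes the
Postnikov cocycle `(g,h,k) ↦ Z(h,k)(g)`. -/
theorem stmt1 {Pi1 Pi2 : Type*} [AddCommGroup Pi1] [AddCommGroup Pi2]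
    (Z : Pi1 → Pi1 → (Pi1 →+ Pi2))
    (hcoc : ∀ g h k : Pi1, Z h k - Z (g + h) k + Z g (h + k) - Z g h = 0)
    (hnorm : ∀ g : Pi1, Z g 0 = 0 ∧ Z 0 g = 0)
    (mul : (Pi1 →+ Pi2) × Pi1 → (Pi1 →+ Pi2) × Pi1 → (Pi1 →+ Pi2) × Pi1)
    (hmul : ∀ (γ γ' : Pi1 →+ Pi2) (g g' : Pi1),
      mul (γ, g) (γ', g') = (γ + γ' + Z g g', g + g'))
    (inv : (Pi1 →+ Pi2) × Pi1 → (Pi1 →+ Pi2) × Pi1)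
    (hinv : ∀ (γ : Pi1 →+ Pi2) (g : Pi1), inv (γ, g) = (-γ - Z g (-g), -g))
    (bd : Pi2 × (Pi1 →+ Pi2) → (Pi1 →+ Pi2) × Pi1)
    (hbd : ∀ (b : Pi2) (γ : Pi1 →+ Pi2), bd (b, γ) = (γ, 0))
    (act : (Pi1 →+ Pi2) × Pi1 → Pi2 × (Pi1 →+ Pi2) → Pi2 × (Pi1 →+ Pi2))
    (hact : ∀ (γ : Pi1 →+ Pi2) (g : Pi1) (b : Pi2) (γ' : Pi1 →+ Pi2),
      act (γ, g) (b, γ') = (b + γ' g, γ'))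
    (s : Pi1 → (Pi1 →+ Pi2) × Pi1) (hs : ∀ g, s g = (0, g))
    (F : Pi1 → Pi1 → Pi2 × (Pi1 →+ Pi2)) (hF : ∀ g h, F g h = (0, Z g h)) :
    -- (a) G is a group with identity (0,0) and the stated inverse
    ((∀ x y z, mul (mul x y) z = mul x (mul y z)) ∧
      (∀ x, mul (0, 0) x = x) ∧ (∀ x, mul x (0, 0) = x) ∧
      (∀ x, mul x (inv x) = (0, 0)) ∧ (∀ x, mul (inv x) x = (0, 0))) ∧
    -- (b) ∂ is a homomorphism with central image
    ((∀ h h', bd (h + h') = mul (bd h) (bd h')) ∧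
      (∀ (γ : Pi1 →+ Pi2) (x : (Pi1 →+ Pi2) × Pi1),
        mul (γ, 0) x = mul x (γ, 0))) ∧
    -- (c) ▷ is an action of G on H by group automorphisms
    ((∀ x h h', act x (h + h') = act x h + act x h') ∧
      (∀ x y h, act (mul x y) h = act x (act y h)) ∧
      (∀ h, act (0, 0) h = h) ∧
      (∀ x, Function.Bijective (act x))) ∧
    -- (d) equivariance and the Peiffer identity: a crossed module
    ((∀ x h, bd (act x h) = mul (mul x (bd h)) (inv x)) ∧
      (∀ h h', act (bd h) h' = h')) ∧
    -- (e) the Postnikov cocycle of the lift F is (g,h,k) ↦ Z(h,k)(g)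
    (∀ g h k : Pi1,
      act (s g) (F h k) + F g (h + k) - F g h - F (g + h) k = (Z h k g, 0)) := by
  have hZ : ∀ g h k : Pi1, Z g h + Z (g + h) k = Z h k + Z g (h + k) := by
    intro g h k
    have h1 := hcoc g h k
    have h2 : (Z g h + Z (g + h) k) - (Z h k + Z g (h + k))
        = -(Z h k - Z (g + h) k + Z g (h + k) - Z g h) := by abel
    rw [h1, neg_zero] at h2
    exact sub_eq_zero.mp h2
  have hsym : ∀ g : Pi1, Z (-g) g = Z g (-g) := by
    intro g
    have := hZ g (-g) g
    simpa [add_neg_cancel, neg_add_cancel, (hnorm g).1, (hnorm g).2] using this.symm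
  refine ⟨⟨?_, ?_, ?_, ?_, ?_⟩, ⟨?_, ?_⟩, ⟨?_, ?_, ?_, ?_⟩, ⟨?_, ?_⟩, ?_⟩
  · rintro ⟨γ, g⟩ ⟨γ', g'⟩ ⟨γ'', g''⟩
    simp only [hmul]
    refine Prod.ext ?_ (by simp [add_assoc])
    have h2 := hZ g g' g''
    show γ + γ' + Z g g' + γ'' + Z (g + g') g'' = γ + (γ' + γ'' + Z g' g'') + Z g (g' + g'')
    rw [show γ + γ' + Z g g' + γ'' + Z (g + g') g''
        = γ + γ' + γ'' + (Z g g' + Z (g + g') g'') from by abel, h2]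
    abel
  · rintro ⟨γ, g⟩
    have : ((0 : Pi1 →+ Pi2), (0 : Pi1)) = ((0 : Pi1 →+ Pi2), (0 : Pi1)) := rfl
    rw [show ((0, 0) : (Pi1 →+ Pi2) × Pi1) = ((0 : Pi1 →+ Pi2), (0 : Pi1)) from rfl, hmul]
    simp [(hnorm g).2]
  · rintro ⟨γ, g⟩
    rw [show ((0, 0) : (Pi1 →+ Pi2) × Pi1) = ((0 : Pi1 →+ Pi2), (0 : Pi1)) from rfl, hmul]
    simp [(hnorm g).1]
  · rintro ⟨γ, g⟩
    rw [hinv, hmul]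
    refine Prod.ext (by simp; abel) (by simp)
  · rintro ⟨γ, g⟩
    rw [hinv, hmul]
    refine Prod.ext ?_ (by simp)
    simp only [hsym g]
    abel
  · rintro ⟨b, γ⟩ ⟨b', γ'⟩
    rw [show ((b, γ) + (b', γ') : Pi2 × (Pi1 →+ Pi2)) = (b + b', γ + γ') from rfl,
      hbd, hbd, hbd, hmul]
    simp [(hnorm 0).1]
  · rintro γ ⟨γ', g⟩
    rw [hmul, hmul]
    refine Prod.ext ?_ (by simp)
    simp [(hnorm g).1, (hnorm g).2]
    abel
  · rintro ⟨γ, g⟩ ⟨b, γ'⟩ ⟨b', γ''⟩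
    rw [show ((b, γ') + (b', γ'') : Pi2 × (Pi1 →+ Pi2)) = (b + b', γ' + γ'') from rfl,
      hact, hact, hact]
    refine Prod.ext (by simp; abel) rfl
  · rintro ⟨γ, g⟩ ⟨γ', g'⟩ ⟨b, γ''⟩
    rw [hmul, hact, hact, hact]
    refine Prod.ext (by simp; abel) rfl
  · rintro ⟨b, γ⟩
    rw [show ((0, 0) : (Pi1 →+ Pi2) × Pi1) = ((0 : Pi1 →+ Pi2), (0 : Pi1)) from rfl, hact]
    simp
  · rintro ⟨γ, g⟩
    have hli : Function.LeftInverse (act (inv (γ, g))) (act (γ, g)) := by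
      rintro ⟨b, γ'⟩
      rw [hact, hinv, hact]
      refine Prod.ext ?_ rfl
      simp
    have hri : Function.RightInverse (act (inv (γ, g))) (act (γ, g)) := by
      rintro ⟨b, γ'⟩
      rw [hinv, hact, hact]
      refine Prod.ext ?_ rfl
      simp
    exact ⟨hli.injective, hri.surjective⟩
  · rintro ⟨γ, g⟩ ⟨b, γ'⟩
    rw [hact, hbd, hbd, hinv, hmul, hmul]
    refine Prod.ext ?_ (by simp)
    simp [(hnorm g).1]
    abel
  · rintro ⟨b, γ⟩ ⟨b', γ'⟩
    rw [hbd, hact]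
    simp
  · intro g h k
    rw [hs, hact, hF, hF, hF, hF]
    have hc : Z h k + Z g (h + k) - Z g h - Z (g + h) k = 0 := by
      have h2 := hZ g h k
      rw [show Z h k + Z g (h + k) - Z g h - Z (g + h) k
          = (Z h k + Z g (h + k)) - (Z g h + Z (g + h) k) from by abel, ← h2, sub_self]
    refine Prod.ext (by simp) ?_
    simpa using hc
end

section
/- Define ∂ : ℤ/4 → ℤ/4 by ∂(a) = 2a, and for each g ∈ ℤ/4 define ρ(g) : ℤ/4 → ℤ/4 by ρ(g)(b) = (2g+1)·b. Then: (a) each ρ(g) is an additive group automorphism of ℤ/4; (b) ρ(g+g') = ρ(g) ∘ ρ(g') for all g,g' ∈ ℤ/4, so ρ is a group homomorphism from ℤ/4 to Aut(ℤ/4); (c) ∂(ρ(g)(h)) = ∂(h) for all g,h ∈ ℤ/4; (d) ρ(∂(h))(h') = h' for all h,h' ∈ ℤ/4; (e) ρ(g)(b) = b whenever b ∈ {0,2} = image of the doubling map. Hence (ℤ/4, ℤ/4, ∂, ρ) is a crossed module (with abelian groups, clauses (c) and (d) are the equivariance and Peiffer identities) whose action is trivial on the image of ℤ/2 → ℤ/4,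 x ↦ 2x. -/
/-- `(ℤ/4, ℤ/4, ∂(a) = 2a, ρ(g)(b) = (2g+1)b)` is a crossed module
whose action is trivial on the image of the doubling map. -/
theorem stmt3 (d : ZMod 4 → ZMod 4) (hd : ∀ a, d a = 2 * a)
    (ρ : ZMod 4 → ZMod 4 → ZMod 4) (hρ : ∀ g b, ρ g b = (2 * g + 1) * b) :
    -- (a) each ρ(g) is an additive automorphism of ℤ/4
    (∀ g, (∀ b b', ρ g (b + b') = ρ g b + ρ g b') ∧ Function.Bijective (ρ g)) ∧
    -- (b) ρ is a homomorphism ℤ/4 → Aut(ℤ/4)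
    (∀ g g' b, ρ (g + g') b = ρ g (ρ g' b)) ∧
    -- (c) equivariance: ∂(ρ(g)(h)) = ∂(h)
    (∀ g h, d (ρ g h) = d h) ∧
    -- (d) Peiffer identity: ρ(∂(h))(h') = h'
    (∀ h h', ρ (d h) h' = h') ∧
    -- (e) triviality of the action on the image of the doubling map
    (∀ g b, (∃ x : ZMod 4, b = 2 * x) → ρ g b = b) := by
  refine ⟨fun g => ⟨fun b b' => by simp [hρ, mul_add], ?_⟩,
    fun g g' b => ?_, fun g h => ?_, fun h h' => ?_, fun g b ⟨x, hx⟩ => ?_⟩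
  · have : ∀ b, ρ g (ρ g b) = b := by
      intro b; simp only [hρ]; ring_nf; revert g b; decide
    exact Function.bijective_iff_has_inverse.2 ⟨ρ g, this, this⟩
  · simp only [hρ]; ring_nf; revert g g' b; decide
  · simp only [hρ, hd]; ring_nf; revert g h; decide
  · simp only [hρ, hd]; ring_nf; revert h h'; decide
  · subst hx; simp only [hρ]; ring_nf; revert g x; decide
end

section
/- Let s : ℤ/2 → ℤ/4 send 0 ↦ 0 and 1 ↦ 1, and let F : ℤ/2 × ℤ/2 → ℤ/4 be defined by F(1,1) = 1 and F(g,h) = 0 otherwise. Then for all g,h,k ∈ ℤ/2: (a) F(h,k) + F(g,h+k) − F(g,h) − F(g+h,k) = 0 in ℤ/4 (so the strictification with the trivial action of ℤ/4 on ℤ/4 has vanishing Postnikov cocycle); and (b) with the action a ▷ b = (2a+1)·b of ℤ/4 on ℤ/4, one has (s(g) ▷ F(h,k)) + F(g,h+k) − F(g,h) − F(g+h,k) = 2·β(g,h,k) in ℤ/4, where β : (ℤ/2)³ → ℤ/2 is β(g,h,k) = g·h·k and 2·(−) denotes the embedding ℤ/2 → ℤ/4 sending x to 2x. -/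
/-!
The lift `F` is the carry of addition mod 2, and carries of addition mod `n` always satisfy the
untwisted cocycle identity: both sides count the carries of `g + h + k`, namely
`(g + h + k) / n` computed on representatives in `[0, n)`. Under the twisted action
`a ▷ b = (2a + 1)b` only `F(1, 1) = 1` is moved, to `3`, which happens precisely at
`g = h = k = 1` and contributes the defect `2 = i(ghk)`.
-/

def carry (n : ℕ) (R : Type*) [NatCast R] (g h : ZMod n) : R := ((g.val + h.val) / n : ℕ)

theorem Nat.div_add_add_mod_div (n x y : ℕ) : y / n + (x + y % n) / n = (x + y) / n := by
  rcases Nat.eq_zero_or_pos n with rfl | hn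
  · simp
  · conv_rhs => rw [← Nat.mod_add_div y n, ← add_assoc, Nat.add_mul_div_left _ _ hn]
    ring

theorem carry_add_carry (n : ℕ) [NeZero n] (R : Type*) [AddMonoidWithOne R] (g h k : ZMod n) :
    carry n R h k + carry n R g (h + k) = carry n R g h + carry n R (g + h) k := by
  have key : (h.val + k.val) / n + (g.val + (h + k).val) / n
      = (g.val + h.val) / n + ((g + h).val + k.val) / n := by
    rw [ZMod.val_add, ZMod.val_add, Nat.div_add_add_mod_div, add_comm ((g.val + h.val) % n),
      Nat.div_add_add_mod_div]
    ring_nf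
  simp only [carry, ← Nat.cast_add, key]

/-- The twisted identity, with the standard section `x ↦ x.val` of `ℤ/4 → ℤ/2`. -/
theorem twisted_carry_two (g h k : ZMod 2) :
    (2 * (g.val : ZMod 4) + 1) * carry 2 (ZMod 4) h k + carry 2 (ZMod 4) g (h + k)
      - carry 2 (ZMod 4) g h - carry 2 (ZMod 4) (g + h) k = 2 * ((g * h * k).val : ZMod 4) := by
  revert g h k
  decide

theorem ZMod.funext_two {α : Type*} {f f' : ZMod 2 → α} (h0 : f 0 = f' 0) (h1 : f 1 = f' 1) :
    f = f' :=
  funext fun x => by fin_cases x <;> assumption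

theorem eq_carry_two {F : ZMod 2 → ZMod 2 → ZMod 4} (hF11 : F 1 1 = 1)
    (hF0 : ∀ g h, ¬(g = 1 ∧ h = 1) → F g h = 0) : F = carry 2 (ZMod 4) := by
  funext g h
  by_cases hgh : g = 1 ∧ h = 1
  · obtain ⟨rfl, rfl⟩ := hgh
    exact hF11
  · rw [hF0 g h hgh]
    revert g h
    decide

/-- for the section `s : ℤ/2 → ℤ/4` and the lift
`F : ℤ/2 × ℤ/2 → ℤ/4` (with `F(1,1) = 1`, zero otherwise), the trivial action
gives a vanishing Postnikov cocycle, while the action `a ▷ b = (2a+1)b`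
gives the nontrivial cocycle `β(g,h,k) = g·h·k` (embedded via `x ↦ 2x`). -/
theorem stmt4 (s : ZMod 2 → ZMod 4) (hs0 : s 0 = 0) (hs1 : s 1 = 1)
    (F : ZMod 2 → ZMod 2 → ZMod 4)
    (hF11 : F 1 1 = 1) (hF0 : ∀ g h, ¬(g = 1 ∧ h = 1) → F g h = 0)
    (β : ZMod 2 → ZMod 2 → ZMod 2 → ZMod 2) (hβ : ∀ g h k, β g h k = g * h * k)
    (e : ZMod 2 → ZMod 4) (he0 : e 0 = 0) (he1 : e 1 = 2) :
    -- (a) trivial action: vanishing Postnikov cocycle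
    (∀ g h k : ZMod 2, F h k + F g (h + k) - F g h - F (g + h) k = 0) ∧
    -- (b) action a ▷ b = (2a+1)b: Postnikov cocycle 2·β(g,h,k)
    (∀ g h k : ZMod 2,
      (2 * s g + 1) * F h k + F g (h + k) - F g h - F (g + h) k = e (β g h k)) := by
  obtain rfl : s = fun x => (x.val : ZMod 4) := ZMod.funext_two hs0 hs1
  obtain rfl : e = fun x => 2 * (x.val : ZMod 4) := ZMod.funext_two he0 he1
  obtain rfl := eq_carry_two hF11 hF0
  refine ⟨fun g h k => ?_, fun g h k => ?_⟩
  · rw [sub_sub, sub_eq_zero, carry_add_carry]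
  · rw [hβ]
    exact twisted_carry_two g h k
end

section
/- There is no function c : ℤ/2 × ℤ/2 → ℂˣ satisfying c(h,k) · c(g,h+k) · c(g,h)⁻¹ · c(g+h,k)⁻¹ = (−1)^{g·h·k} for all g,h,k ∈ ℤ/2, where (−1)^{g·h·k} denotes −1 if g = h = k = 1 and +1 otherwise. (The same holds with values restricted to the circle group U(1) ⊂ ℂˣ.) -/
/-!
Write `δc(g,h,k) = c(h,k) c(g,h+k) c(g,h)⁻¹ c(g+h,k)⁻¹`. For `g` of order two,
`δc(g,g,g) = c(g,0)/c(0,g)`, `δc(g,g,0) = c(g,0)/c(0,0)` and `δc(0,0,g) = c(0,g)/c(0,0)`,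
so `δc(g,g,g) = δc(g,g,0) / δc(0,0,g)` for every `c`. On `ℤ/2` with `g = 1` the target
cocycle would give `-1 = 1 / 1`.
-/

def coboundary {G M : Type*} [Add G] [CommGroup M] (c : G → G → M) (g h k : G) : M :=
  c h k * c g (h + k) * (c g h)⁻¹ * (c (g + h) k)⁻¹

theorem coboundary_self_self_self {G M : Type*} [AddMonoid G] [CommGroup M] (c : G → G → M)
    {g : G} (hg : g + g = 0) :
    coboundary c g g g = coboundary c g g 0 / coboundary c 0 0 g := by
  simp only [coboundary, hg, add_zero, zero_add]
  simp [div_eq_mul_inv, mul_comm, mul_assoc, mul_left_comm]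

theorem not_exists_coboundary_eq_sign {M : Type*} [CommGroup M] [HasDistribNeg M]
    (hM : (-1 : M) ≠ 1) :
    ¬∃ c : ZMod 2 → ZMod 2 → M,
      ∀ g h k : ZMod 2, coboundary c g h k = if g = 1 ∧ h = 1 ∧ k = 1 then -1 else 1 := by
  rintro ⟨c, hc⟩
  have h := coboundary_self_self_self c (g := (1 : ZMod 2)) rfl
  rw [hc, hc, hc] at h
  exact hM (by simpa using h)

/-- there is no `c : ℤ/2 × ℤ/2 → ℂˣ` with
`δc(g,h,k) = (−1)^{g·h·k}`; the same holds with values restricted to the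
circle group `U(1) ⊂ ℂˣ` (i.e. units of absolute value 1). -/
theorem stmt7 :
    (¬∃ c : ZMod 2 → ZMod 2 → ℂˣ,
      ∀ g h k : ZMod 2,
        c h k * c g (h + k) * (c g h)⁻¹ * (c (g + h) k)⁻¹ =
          if g = 1 ∧ h = 1 ∧ k = 1 then -1 else 1) ∧
    (¬∃ c : ZMod 2 → ZMod 2 → ℂˣ,
      (∀ g h : ZMod 2, ‖((c g h : ℂ))‖ = 1) ∧
      ∀ g h k : ZMod 2,
        c h k * c g (h + k) * (c g h)⁻¹ * (c (g + h) k)⁻¹ =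
          if g = 1 ∧ h = 1 ∧ k = 1 then -1 else 1) := by
  have key := not_exists_coboundary_eq_sign (M := ℂˣ) (by rw [Ne, Units.ext_iff]; norm_num)
  exact ⟨key, fun ⟨c, _, hc⟩ => key ⟨c, hc⟩⟩
end

section
/- Let M, K, N, w be natural numbers with M ∣ w·K. Then (w·K + 1)^N ≡ 1 + N·w·K (mod M·K). Moreover, if K > 0, then (w·K + 1)^N ≡ 1 (mod M·K) if and only if M ∣ N·w. -/
/-- if `M ∣ w·K` then `(wK+1)^N ≡ 1 + N·w·K (mod MK)`; moreover,
for `K > 0`, `(wK+1)^N ≡ 1 (mod MK)` if and only if `M ∣ N·w`. -/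
theorem stmt10 (M K N w : ℕ) (hMwK : M ∣ w * K) :
    (w * K + 1) ^ N ≡ 1 + N * w * K [MOD M * K] ∧
    (0 < K → (((w * K + 1) ^ N ≡ 1 [MOD M * K]) ↔ M ∣ N * w)) := by
  have h1 : ∀ n : ℕ, (w * K + 1) ^ n ≡ 1 + n * w * K [MOD M * K] := by
    intro n
    induction n with
    | zero => simpa using Nat.ModEq.refl 1
    | succ n ih =>
      have step : (w * K + 1) ^ (n + 1) ≡ (1 + n * w * K) * (w * K + 1) [MOD M * K] := by
        rw [pow_succ]
        exact ih.mul_right _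
      have hdvd : M * K ∣ n * w * K * (w * K) := by
        have h2 : M * K ∣ w * K * K := Nat.mul_dvd_mul_right hMwK K
        have h3 : n * w * K * (w * K) = n * w * (w * K * K) := by ring
        rw [h3]
        exact Dvd.dvd.mul_left h2 (n * w)
      have heq : (1 + n * w * K) * (w * K + 1) = (1 + (n + 1) * w * K) + n * w * K * (w * K) := by
        ring
      have h0 : (1 + (n + 1) * w * K) + n * w * K * (w * K) ≡
          (1 + (n + 1) * w * K) + 0 [MOD M * K] :=
        Nat.ModEq.add_left _ ((Nat.modEq_zero_iff_dvd).mpr hdvd)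
      calc (w * K + 1) ^ (n + 1)
          ≡ (1 + n * w * K) * (w * K + 1) [MOD M * K] := step
        _ = (1 + (n + 1) * w * K) + n * w * K * (w * K) := heq
        _ ≡ (1 + (n + 1) * w * K) + 0 [MOD M * K] := h0
        _ = 1 + (n + 1) * w * K := by ring
  refine ⟨h1 N, fun hK => ?_⟩
  have key : ((w * K + 1) ^ N ≡ 1 [MOD M * K]) ↔ (1 + N * w * K ≡ 1 [MOD M * K]) :=
    ⟨fun h => (h1 N).symm.trans h, fun h => (h1 N).trans h⟩
  rw [key]
  constructor
  · intro h
    have := (Nat.modEq_iff_dvd' (by omega : 1 ≤ 1 + N * w * K)).mp h.symm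
    simp only [Nat.add_sub_cancel_left] at this
    exact (Nat.mul_dvd_mul_iff_right hK).mp this
  · intro h
    have : M * K ∣ N * w * K := Nat.mul_dvd_mul_right h K
    exact ((Nat.modEq_iff_dvd' (by omega : 1 ≤ 1 + N * w * K)).mpr (by simpa using this)).symm
end

section
/- Let σ = (1 3)(2 4) and ρ = (1 2 3 4) in the symmetric group S₄ of permutations of a four-element set, and set K = ℤ/4 × S₄ (direct product of groups, ℤ/4 additive). Define t_H : ℤ/4 → K by t_H(h) = (h, σ^h) (well defined since σ² = 1), and define t_G : ℤ/4 → Aut(K) by t_G(g)(x,π) = ((−1)^g·x, ρ^g·π·ρ^{−g}) (well defined since negation of ℤ/4 has order 2 and ρ has order 4). Then: (a) t_H and t_G are injective group homomorphisms; (b) conjugation in K by t_H(h) equals the automorphism t_G(2h) for every h ∈ ℤ/4; (c) t_G(g)(t_H(h)) = t_H((2g+1)·h) for all g,h ∈ ℤ/4. -/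
set_option maxRecDepth 100000

/-- the faithful automorphism 2-representation of the crossed
module `(ℤ/4, ℤ/4, ∂ = ×2, g ▷ h = (2g+1)h)` on the group
`K = ℤ/4 × S₄`, with `σ = (1 3)(2 4)`, `ρ = (1 2 3 4)`,
`t_H(h) = (h, σ^h)` and `t_G(g)(x,π) = ((−1)^g·x, ρ^g·π·ρ^{−g})`. -/
theorem stmt13 (σ ρ : Equiv.Perm (Fin 4))
    (hσ : σ = Equiv.swap 0 2 * Equiv.swap 1 3)
    (hρ : ρ = finRotate 4)
    (tH : ZMod 4 → Multiplicative (ZMod 4) × Equiv.Perm (Fin 4))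
    (htH : ∀ h : ZMod 4, tH h = (Multiplicative.ofAdd h, σ ^ h.val))
    (tG : ZMod 4 → Multiplicative (ZMod 4) × Equiv.Perm (Fin 4) →
      Multiplicative (ZMod 4) × Equiv.Perm (Fin 4))
    (htG : ∀ (g : ZMod 4) (x : Multiplicative (ZMod 4) × Equiv.Perm (Fin 4)),
      tG g x = (Multiplicative.ofAdd ((-1 : ZMod 4) ^ g.val *
          Multiplicative.toAdd x.1),
        ρ ^ g.val * x.2 * (ρ ^ g.val)⁻¹)) :
    -- (a) tH and tG are injective group homomorphisms (into K and Aut(K))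
    (Function.Injective tH ∧ (∀ h h' : ZMod 4, tH (h + h') = tH h * tH h')) ∧
    (Function.Injective tG ∧
      (∀ g : ZMod 4, (∀ x y, tG g (x * y) = tG g x * tG g y) ∧
        Function.Bijective (tG g)) ∧
      (∀ (g g' : ZMod 4) x, tG (g + g') x = tG g (tG g' x))) ∧
    -- (b) conjugation by tH(h) equals tG(2h)
    (∀ (h : ZMod 4) (x : Multiplicative (ZMod 4) × Equiv.Perm (Fin 4)),
      tH h * x * (tH h)⁻¹ = tG (2 * h) x) ∧
    -- (c) intertwining with the crossed-module action
    (∀ g h : ZMod 4, tG g (tH h) = tH ((2 * g + 1) * h)) := by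
  subst hσ hρ
  -- small decidable facts
  have L1 : ∀ h h' : ZMod 4,
      (Equiv.swap (0 : Fin 4) 2 * Equiv.swap 1 3) ^ (h + h').val =
      (Equiv.swap (0 : Fin 4) 2 * Equiv.swap 1 3) ^ h.val *
      (Equiv.swap (0 : Fin 4) 2 * Equiv.swap 1 3) ^ h'.val := by decide
  have L2 : ∀ g g' : ZMod 4,
      finRotate 4 ^ (g + g').val = finRotate 4 ^ g.val * finRotate 4 ^ g'.val := by decide
  have L3 : ∀ g g' : ZMod 4,
      ((-1 : ZMod 4)) ^ (g + g').val = (-1 : ZMod 4) ^ g.val * (-1 : ZMod 4) ^ g'.val := by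
    decide
  have L4 : ∀ h : ZMod 4, ((-1 : ZMod 4)) ^ (2 * h).val = 1 := by decide
  have L5 : ∀ h : ZMod 4,
      (Equiv.swap (0 : Fin 4) 2 * Equiv.swap 1 3) ^ h.val = finRotate 4 ^ (2 * h).val := by
    decide
  have L6 : ∀ g h : ZMod 4, (-1 : ZMod 4) ^ g.val * h = (2 * g + 1) * h := by decide
  have L7 : ∀ g h : ZMod 4,
      finRotate 4 ^ g.val * (Equiv.swap (0 : Fin 4) 2 * Equiv.swap 1 3) ^ h.val *
        (finRotate 4 ^ g.val)⁻¹ =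
      (Equiv.swap (0 : Fin 4) 2 * Equiv.swap 1 3) ^ ((2 * g + 1) * h).val := by decide
  have L8 : ∀ g g' : ZMod 4,
      finRotate 4 ^ g.val * Equiv.swap (0 : Fin 4) 1 * (finRotate 4 ^ g.val)⁻¹ =
      finRotate 4 ^ g'.val * Equiv.swap (0 : Fin 4) 1 * (finRotate 4 ^ g'.val)⁻¹ →
      g = g' := by decide
  have hzero : ∀ x, tG 0 x = x := by
    intro x
    rw [htG]
    simp [ZMod.val_zero]
  have hcomp : ∀ (g g' : ZMod 4) x, tG (g + g') x = tG g (tG g' x) := by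
    intro g g' x
    rw [htG, htG, htG]
    refine Prod.ext ?_ ?_
    · simp [L3, mul_assoc]
    · simp only []
      rw [L2]
      group
  refine ⟨⟨?_, ?_⟩, ⟨?_, fun g => ⟨?_, ?_⟩, hcomp⟩, ?_, ?_⟩
  · -- tH injective
    intro a b hab
    rw [htH, htH] at hab
    simpa using congrArg (fun p => Multiplicative.toAdd p.1) hab
  · -- tH hom
    intro h h'
    rw [htH, htH, htH]
    refine Prod.ext ?_ ?_
    · simp [ofAdd_add]
    · exact L1 h h'
  · -- tG injective
    intro g g' hgg
    have := congrFun hgg (1, Equiv.swap (0 : Fin 4) 1)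
    rw [htG, htG] at this
    exact L8 g g' (congrArg Prod.snd this)
  · -- tG g multiplicative
    intro x y
    rw [htG, htG, htG]
    refine Prod.ext ?_ ?_
    · simp [mul_add, ofAdd_add]
    · simp only [Prod.snd_mul]
      group
  · -- tG g bijective
    refine Function.bijective_iff_has_inverse.mpr ⟨tG (-g), fun x => ?_, fun x => ?_⟩
    · rw [← hcomp, neg_add_cancel]; exact hzero x
    · rw [← hcomp, add_neg_cancel]; exact hzero x
  · -- (b)
    intro h x
    rw [htH, htG]
    refine Prod.ext ?_ ?_
    · simp only [Prod.fst_mul, Prod.fst_inv, L4, one_mul, ofAdd_toAdd]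
      exact mul_inv_cancel_comm _ _
    · simp only [Prod.snd_mul, Prod.snd_inv]
      rw [L5]
  · -- (c)
    intro g h
    rw [htH, htG, htH]
    refine Prod.ext ?_ ?_
    · simpa using congrArg Multiplicative.ofAdd (L6 g h)
    · exact L7 g h
end

section
/- Let r, u, s ∈ ℝ with r < 0 and u > 0, and let b ∈ ℂ with |b|² = −r/(12u). Define Φ ∈ ℂ⁴ by Φ = b·(−2, 1, 0, 1). Then Φ satisfies the static Landau–Ginzburg equation r·Φ + 2u·‖Φ‖²·Φ + 2s·T²·conj(T)·(1,1,1,1) = 0, where ‖Φ‖² = Σᵢ |Φᵢ|² and T = Σᵢ Φᵢ. -/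
/-! The entries of `(−2, 1, 0, 1)` sum to zero, so `T = 0` and the cubic `s`-term
drops out; the remaining equation `(r + 2u‖Φ‖²)·Φ = 0` holds because `‖Φ‖² = 6|b|² = −r/(2u)`. -/

open ComplexConjugate

theorem landauGinzburg_eq_zero_of_sum_eq_zero {ι : Type*} [Fintype ι] (r u s : ℝ) (Φ : ι → ℂ)
    (hT : ∑ j, Φ j = 0) (hN : r + 2 * u * ∑ j, ‖Φ j‖ ^ 2 = 0) (i : ι) :
    (r : ℂ) * Φ i + 2 * (u : ℂ) * (∑ j, ((‖Φ j‖ : ℝ) : ℂ) ^ 2) * Φ i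
      + 2 * (s : ℂ) * (∑ j, Φ j) ^ 2 * conj (∑ j, Φ j) * 1 = 0 := by
  have hN' : (r : ℂ) + 2 * u * ∑ j, ((‖Φ j‖ : ℝ) : ℂ) ^ 2 = 0 := by exact_mod_cast hN
  rw [hT]
  linear_combination Φ i * hN'

theorem sum_norm_smul_sq {ι : Type*} [Fintype ι] (b : ℂ) (v : ι → ℂ) :
    ∑ j, ‖b * v j‖ ^ 2 = ‖b‖ ^ 2 * ∑ j, ‖v j‖ ^ 2 := by
  simp only [norm_mul, mul_pow, Finset.mul_sum]

theorem sum_vec_neg_two_one_zero_one : ∑ j : Fin 4, (![-2, 1, 0, 1] : Fin 4 → ℂ) j = 0 := by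
  simp [Fin.sum_univ_four]
  norm_num

theorem sum_norm_sq_vec_neg_two_one_zero_one : ∑ j : Fin 4, ‖(![-2, 1, 0, 1] : Fin 4 → ℂ) j‖ ^ 2 = 6 := by
  simp [Fin.sum_univ_four]
  norm_num

theorem stmt14_general (r u s : ℝ) (hu : 0 < u) (b : ℂ)
    (hb : ‖b‖ ^ 2 = -r / (12 * u))
    (Φ : Fin 4 → ℂ) (hΦ : Φ = fun i => b * ![-2, 1, 0, 1] i) :
    ∀ i : Fin 4,
      (r : ℂ) * Φ i
        + 2 * (u : ℂ) * (∑ j : Fin 4, ((‖Φ j‖ : ℝ) : ℂ) ^ 2) * Φ i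
        + 2 * (s : ℂ) * (∑ j : Fin 4, Φ j) ^ 2
            * (starRingEnd ℂ) (∑ j : Fin 4, Φ j) * 1 = 0 := by
  subst hΦ
  refine landauGinzburg_eq_zero_of_sum_eq_zero r u s _ ?_ ?_
  · rw [← Finset.mul_sum, sum_vec_neg_two_one_zero_one, mul_zero]
  · rw [sum_norm_smul_sq, sum_norm_sq_vec_neg_two_one_zero_one, hb]
    field_simp
    ring

/-- the configuration `Φ = b·(−2,1,0,1)` with
`|b|² = −r/(12u)` solves the static Landau–Ginzburg equation
`r·Φ + 2u·‖Φ‖²·Φ + 2s·T²·conj(T)·(1,1,1,1) = 0` with `T = Σᵢ Φᵢ`. -/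
theorem stmt14 (r u s : ℝ) (hr : r < 0) (hu : 0 < u) (b : ℂ)
    (hb : ‖b‖ ^ 2 = -r / (12 * u))
    (Φ : Fin 4 → ℂ) (hΦ : Φ = fun i => b * ![-2, 1, 0, 1] i) :
    ∀ i : Fin 4,
      (r : ℂ) * Φ i
        + 2 * (u : ℂ) * (∑ j : Fin 4, ((‖Φ j‖ : ℝ) : ℂ) ^ 2) * Φ i
        + 2 * (s : ℂ) * (∑ j : Fin 4, Φ j) ^ 2
            * (starRingEnd ℂ) (∑ j : Fin 4, Φ j) * 1 = 0 :=
  stmt14_general r u s hu b hb Φ hΦ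
end

section
/- Let r, u, s ∈ ℝ with r < 0 and u > 0, and let c ∈ ℂ with |c|² = −r/(8u). Define Φ : ℤ/4 → ℂ by Φ(0) = c, Φ(1) = −c, Φ(2) = c, Φ(3) = −c. Then: (a) Φ satisfies r·Φ + 2u·‖Φ‖²·Φ + 2s·T²·conj(T)·𝟙 = 0, where ‖Φ‖² = Σ_k |Φ(k)|², T = Σ_k Φ(k), and 𝟙 is the constant function with value 1; and (b) Φ(k+2) = Φ(k) and Φ(−k) = Φ(k) for all k ∈ ℤ/4, i.e., Φ is invariant under the index shift by 2 and under index negation. -/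
/-! The alternating configuration has vanishing trace `T = Σ Φ(k)`, so the quartic `s`-term
drops out of the equation of motion, which then reduces to the scalar condition
`r + 2u‖Φ‖² = 0`; since `‖Φ‖² = 4|c|²`, this is exactly `|c|² = −r/(8u)`. The symmetries
hold because `Φ` only depends on the parity of the index, which both `k ↦ k + 2` and
`k ↦ −k` preserve. -/

theorem ZMod.four_cases (k : ZMod 4) : k = 0 ∨ k = 1 ∨ k = 2 ∨ k = 3 := by
  revert k
  decide

theorem ZMod.sum_univ_four {M : Type*} [AddCommMonoid M] (f : ZMod 4 → M) :
    ∑ j, f j = f 0 + f 1 + f 2 + f 3 :=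
  Fin.sum_univ_four f

theorem ZMod.apply_add_two_eq_of_four {α : Type*} (f : ZMod 4 → α) (h02 : f 0 = f 2)
    (h13 : f 1 = f 3) (k : ZMod 4) : f (k + 2) = f k := by
  rcases ZMod.four_cases k with rfl | rfl | rfl | rfl
  · exact h02.symm
  · exact h13.symm
  · exact h02
  · exact h13

theorem ZMod.apply_neg_eq_of_four {α : Type*} (f : ZMod 4 → α) (h13 : f 1 = f 3)
    (k : ZMod 4) : f (-k) = f k := by
  rcases ZMod.four_cases k with rfl | rfl | rfl | rfl
  · rfl
  · exact h13.symm
  · rfl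
  · exact h13

theorem static_equation_of_sum_eq_zero {ι : Type*} [Fintype ι] (r u s : ℝ) (Φ : ι → ℂ)
    (hT : ∑ j, Φ j = 0) (hmass : (r : ℂ) + 2 * u * ∑ j, (‖Φ j‖ : ℂ) ^ 2 = 0) (k : ι) :
    (r : ℂ) * Φ k + 2 * (u : ℂ) * (∑ j, (‖Φ j‖ : ℂ) ^ 2) * Φ k
      + 2 * (s : ℂ) * (∑ j, Φ j) ^ 2 * (starRingEnd ℂ) (∑ j, Φ j) * 1 = 0 := by
  rw [hT]
  linear_combination Φ k * hmass

theorem stmt15_general (r u s : ℝ) (hu : 0 < u) (c : ℂ)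
    (hc : ‖c‖ ^ 2 = -r / (8 * u))
    (Φ : ZMod 4 → ℂ)
    (hΦ0 : Φ 0 = c) (hΦ1 : Φ 1 = -c) (hΦ2 : Φ 2 = c) (hΦ3 : Φ 3 = -c) :
    -- (a) the static equation of motion
    (∀ k : ZMod 4,
      (r : ℂ) * Φ k
        + 2 * (u : ℂ) * (∑ j : ZMod 4, (‖Φ j‖ : ℂ) ^ 2) * Φ k
        + 2 * (s : ℂ) * (∑ j : ZMod 4, Φ j) ^ 2
            * (starRingEnd ℂ) (∑ j : ZMod 4, Φ j) * 1 = 0) ∧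
    -- (b) invariance under shift by 2 and under negation of the index
    (∀ k : ZMod 4, Φ (k + 2) = Φ k) ∧ (∀ k : ZMod 4, Φ (-k) = Φ k) := by
  have hT : ∑ j, Φ j = 0 := by
    rw [ZMod.sum_univ_four, hΦ0, hΦ1, hΦ2, hΦ3]
    ring
  have hmass : (r : ℂ) + 2 * u * ∑ j, (‖Φ j‖ : ℂ) ^ 2 = 0 := by
    have hc' : 8 * (u : ℂ) * (‖c‖ : ℂ) ^ 2 = -r := by
      have : 8 * u * ‖c‖ ^ 2 = -r := by
        rw [hc]
        field_simp
      exact_mod_cast this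
    rw [ZMod.sum_univ_four, hΦ0, hΦ1, hΦ2, hΦ3, norm_neg]
    linear_combination hc'
  exact ⟨static_equation_of_sum_eq_zero r u s Φ hT hmass,
    ZMod.apply_add_two_eq_of_four Φ (hΦ0.trans hΦ2.symm) (hΦ1.trans hΦ3.symm),
    ZMod.apply_neg_eq_of_four Φ (hΦ1.trans hΦ3.symm)⟩

/-- the configuration `Φ = (c, −c, c, −c)` on `ℤ/4` with
`|c|² = −r/(8u)` solves the static Landau–Ginzburg equation
`r·Φ + 2u·‖Φ‖²·Φ + 2s·T²·conj(T)·𝟙 = 0`, and is invariant under the index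
shift by `2` and under index negation. -/
theorem stmt15 (r u s : ℝ) (hr : r < 0) (hu : 0 < u) (c : ℂ)
    (hc : ‖c‖ ^ 2 = -r / (8 * u))
    (Φ : ZMod 4 → ℂ)
    (hΦ0 : Φ 0 = c) (hΦ1 : Φ 1 = -c) (hΦ2 : Φ 2 = c) (hΦ3 : Φ 3 = -c) :
    -- (a) the static equation of motion
    (∀ k : ZMod 4,
      (r : ℂ) * Φ k
        + 2 * (u : ℂ) * (∑ j : ZMod 4, (‖Φ j‖ : ℂ) ^ 2) * Φ k
        + 2 * (s : ℂ) * (∑ j : ZMod 4, Φ j) ^ 2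
            * (starRingEnd ℂ) (∑ j : ZMod 4, Φ j) * 1 = 0) ∧
    -- (b) invariance under shift by 2 and under negation of the index
    (∀ k : ZMod 4, Φ (k + 2) = Φ k) ∧ (∀ k : ZMod 4, Φ (-k) = Φ k) :=
  stmt15_general r u s hu c hc Φ hΦ0 hΦ1 hΦ2 hΦ3
end
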